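/- Suppose f(t) = Φ(b−t) − Φ(a−t) with a < b, where Φ is the standard normal CDF. Then f is log-concave on ℝ. -/

import Mathlib

open Real MeasureTheory

/-- Standard normal density. -/
noncomputable def normalPDF (t : ℝ) : ℝ := (Real.sqrt (2 * Real.pi))⁻¹ * Real.exp (-t ^ 2 / 2)

/-- Standard normal CDF `Φ`. -/
noncomputable def normalCDF (t : ℝ) : ℝ := ∫ s in Set.Iic t, normalPDF s

/-!
Write `φ' = -ψ φ` with `ψ` monotone (for the Gaussian, `ψ = id`) and let `F' = φ`. For
`f(t) = F(b - t) - F(a - t)` we have `f' = φ(α) - φ(β)` and `f'' = ψ(α)φ(α) - ψ(β)φ(β)`, where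
`α = a - t < β = b - t`. Log-concavity amounts to `f'' f ≤ f'^2`. Since `φ(α) - φ(β) = ∫_α^β ψ φ`
is `f` times a `φ`-weighted mean of `ψ` over `[α, β]`, it lies between `ψ(α) f` and `ψ(β) f`
(equivalently, `x ↦ c F(x) + φ(x)`, of derivative `(c - ψ(x)) φ(x)`, is antitone on `[α, β]` for
`c = ψ(α)` and monotone for `c = ψ(β)`), and then
`f'' f = φ(α) ψ(α) f - φ(β) ψ(β) f ≤ (φ(α) - φ(β)) f' = f'^2`.
-/

open Set

lemma concaveOn_univ_log_of_mul_le_sq {f f' f'' : ℝ → ℝ} (hf : ∀ x, HasDerivAt f (f' x) x)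
    (hf' : ∀ x, HasDerivAt f' (f'' x) x) (hpos : ∀ x, 0 < f x)
    (hle : ∀ x, f'' x * f x ≤ f' x ^ 2) : ConcaveOn ℝ univ fun x => log (f x) := by
  have hlog : ∀ x, HasDerivAt (fun x => log (f x)) (f' x / f x) x :=
    fun x => (hf x).log (hpos x).ne'
  have hlog' : ∀ x, HasDerivAt (fun x => f' x / f x)
      ((f'' x * f x - f' x * f' x) / f x ^ 2) x :=
    fun x => (hf' x).div (hf x) (hpos x).ne'
  refine concaveOn_of_hasDerivWithinAt2_nonpos convex_univ
    (fun x _ => (hlog x).continuousAt.continuousWithinAt)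
    (fun x _ => (hlog x).hasDerivWithinAt) (fun x _ => (hlog' x).hasDerivWithinAt) ?_
  intro x _
  exact div_nonpos_of_nonpos_of_nonneg (by nlinarith [hle x]) (sq_nonneg _)

section LogConcaveDensity

variable {F φ ψ : ℝ → ℝ} (hF : ∀ x, HasDerivAt F (φ x) x)
  (hφ : ∀ x, HasDerivAt φ (-(ψ x * φ x)) x) (hψ : Monotone ψ)
include hF hφ hψ

lemma mul_sub_le_sub_of_monotone (hφ_nonneg : ∀ x, 0 ≤ φ x) {α β : ℝ} (hαβ : α ≤ β) :
    ψ α * (F β - F α) ≤ φ α - φ β := by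
  have hg : ∀ x, HasDerivAt (fun x => ψ α * F x + φ x) ((ψ α - ψ x) * φ x) x := fun x =>
    (((hF x).const_mul (ψ α)).add (hφ x)).congr_deriv (by ring)
  have hanti : AntitoneOn (fun x => ψ α * F x + φ x) (Icc α β) :=
    antitoneOn_of_hasDerivWithinAt_nonpos (convex_Icc α β)
      (fun x _ => (hg x).continuousAt.continuousWithinAt) (fun x _ => (hg x).hasDerivWithinAt)
      fun x hx => mul_nonpos_of_nonpos_of_nonneg
        (sub_nonpos.2 (hψ (interior_subset hx).1)) (hφ_nonneg x)
  have := hanti (left_mem_Icc.2 hαβ) (right_mem_Icc.2 hαβ) hαβ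
  linarith

lemma sub_le_mul_sub_of_monotone (hφ_nonneg : ∀ x, 0 ≤ φ x) {α β : ℝ} (hαβ : α ≤ β) :
    φ α - φ β ≤ ψ β * (F β - F α) := by
  have hg : ∀ x, HasDerivAt (fun x => ψ β * F x + φ x) ((ψ β - ψ x) * φ x) x := fun x =>
    (((hF x).const_mul (ψ β)).add (hφ x)).congr_deriv (by ring)
  have hmono : MonotoneOn (fun x => ψ β * F x + φ x) (Icc α β) :=
    monotoneOn_of_hasDerivWithinAt_nonneg (convex_Icc α β)
      (fun x _ => (hg x).continuousAt.continuousWithinAt) (fun x _ => (hg x).hasDerivWithinAt)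
      fun x hx => mul_nonneg (sub_nonneg.2 (hψ (interior_subset hx).2)) (hφ_nonneg x)
  have := hmono (left_mem_Icc.2 hαβ) (right_mem_Icc.2 hαβ) hαβ
  linarith

lemma mul_sub_mul_mul_sub_le_sq (hφ_nonneg : ∀ x, 0 ≤ φ x) {α β : ℝ} (hαβ : α ≤ β) :
    (ψ α * φ α - ψ β * φ β) * (F β - F α) ≤ (φ α - φ β) ^ 2 := by
  have hlow := mul_sub_le_sub_of_monotone hF hφ hψ hφ_nonneg hαβ
  have hupp := sub_le_mul_sub_of_monotone hF hφ hψ hφ_nonneg hαβ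
  nlinarith [mul_le_mul_of_nonneg_left hlow (hφ_nonneg α),
    mul_le_mul_of_nonneg_left hupp (hφ_nonneg β)]

theorem concaveOn_log_sub_comp_sub (hφ_pos : ∀ x, 0 < φ x) {a b : ℝ} (hab : a < b) :
    ConcaveOn ℝ univ fun t => log (F (b - t) - F (a - t)) := by
  have hsub : ∀ c t, HasDerivAt (fun t : ℝ => c - t) (-1) t := fun c t =>
    by simpa using (hasDerivAt_id t).const_sub c
  refine concaveOn_univ_log_of_mul_le_sq
    (f' := fun t => φ (a - t) - φ (b - t))
    (f'' := fun t => ψ (a - t) * φ (a - t) - ψ (b - t) * φ (b - t))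
    (fun t => (((hF _).comp t (hsub b t)).sub ((hF _).comp t (hsub a t))).congr_deriv
      (by ring))
    (fun t => (((hφ _).comp t (hsub a t)).sub ((hφ _).comp t (hsub b t))).congr_deriv
      (by ring))
    (fun t => sub_pos.2 (strictMono_of_hasDerivAt_pos hF hφ_pos (by linarith)))
    fun t => mul_sub_mul_mul_sub_le_sq hF hφ hψ (fun x => (hφ_pos x).le) (by linarith)

end LogConcaveDensity

lemma normalPDF_eq_gaussianPDFReal : normalPDF = ProbabilityTheory.gaussianPDFReal 0 1 := by
  ext x
  simp [normalPDF, ProbabilityTheory.gaussianPDFReal]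

lemma normalPDF_pos (x : ℝ) : 0 < normalPDF x := by
  rw [normalPDF_eq_gaussianPDFReal]
  exact ProbabilityTheory.gaussianPDFReal_pos 0 1 x one_ne_zero

lemma integrable_normalPDF : Integrable normalPDF := by
  rw [normalPDF_eq_gaussianPDFReal]
  exact ProbabilityTheory.integrable_gaussianPDFReal 0 1

lemma hasDerivAt_normalPDF (x : ℝ) : HasDerivAt normalPDF (-(x * normalPDF x)) x := by
  have hexp : HasDerivAt (fun t : ℝ => -t ^ 2 / 2) (-x) x := by
    exact (((hasDerivAt_pow 2 x).neg).div_const 2).congr_deriv (by ring)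
  exact (hexp.exp.const_mul _).congr_deriv (by simp only [normalPDF]; ring)

lemma hasDerivAt_normalCDF (x : ℝ) : HasDerivAt normalCDF (normalPDF x) x := by
  have hCDF : normalCDF = fun t => normalCDF 0 + ∫ s in (0 : ℝ)..t, normalPDF s := by
    ext t
    rw [← intervalIntegral.integral_Iic_sub_Iic integrable_normalPDF.integrableOn
      integrable_normalPDF.integrableOn, normalCDF, normalCDF]
    ring
  have hcont : Continuous normalPDF := by unfold normalPDF; fun_prop
  rw [hCDF]
  exact (hcont.integral_hasStrictDerivAt 0 x).hasDerivAt.const_add _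

/-- For `a < b`, the function `f(t) = Φ(b−t) − Φ(a−t)` is log-concave on `ℝ`:
it is positive and `log ∘ f` is concave. -/
theorem gaussian_smoothed_indicator_log_concave (a b : ℝ) (hab : a < b) :
    (∀ t : ℝ, 0 < normalCDF (b - t) - normalCDF (a - t)) ∧
      ConcaveOn ℝ Set.univ
        (fun t : ℝ => Real.log (normalCDF (b - t) - normalCDF (a - t))) :=
  ⟨fun _ => sub_pos.2 (strictMono_of_hasDerivAt_pos hasDerivAt_normalCDF normalPDF_pos
      (by linarith)),
    concaveOn_log_sub_comp_sub hasDerivAt_normalCDF hasDerivAt_normalPDF monotone_id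
      normalPDF_pos hab⟩
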